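/- Let K be a field, a, b positive integers, g = gcd(a,b), and let A be a set with {0,g} ⊆ A ⊆ {0,1,…,g}. Let d = gcd(A), let I = I_A, J = (x^a, y^b), and set m = g/d − |A| + 2 (note m ≥ 1 since every element of A is a multiple of d). Then I^{m+1} = J·I^m; in other words, the reduction number of I with respect to J is at most g/gcd(A) − |A| + 2. -/

import Mathlib

/-!
The generators of `I` are `f i = x^(i α) y^((g - i) β)` with `α = a / g`, `β = b / g`, so a
product `f t₁ ⋯ f tₙ` only depends on `n` and `t₁ + ⋯ + tₙ`, and `J = (f g, f 0)`. Hence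
`I^(m+1) = J I^m` amounts to: every multiset `T` of `m + 1` elements of `A` has the same sum as
`ε` plus `m` elements of `A`, for some `ε ∈ {0, g}`. If `T` fails this, it avoids `0` and `g`,
and its prefix sums `s₂, …, s_{m+1}` are pairwise incongruent modulo `g` (a block with sum `c g`
could be replaced by `c` copies of `g`, fewer than its length) with residues outside `A` (a
prefix could be replaced by its residue and copies of `g`). These residues are multiples of
`d = gcd A` in `(0, g)`, where `A \ {0}` already takes `|A| - 1` of the `g / d` places; so
`m ≤ g / d - |A| + 1`.
-/

open MvPolynomial Pointwise

/-- The monomial `x^c y^d` in `K[x,y]`. -/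
noncomputable def mono (K : Type*) [Field K] (c d : ℕ) : MvPolynomial (Fin 2) K :=
  X 0 ^ c * X 1 ^ d

/-- The ideal `J = (x^a, y^b)`. -/
noncomputable def Jab (K : Type*) [Field K] (a b : ℕ) : Ideal (MvPolynomial (Fin 2) K) :=
  Ideal.span {mono K a 0, mono K 0 b}

/-- For `A ⊆ {0,…,g}` with `g = gcd(a,b)`, the ideal `I_A` generated by the
monomials `x^(i·(a/g)) y^(b − i·(b/g))` for `i ∈ A`. -/
noncomputable def IA (K : Type*) [Field K] (a b : ℕ) (A : Finset ℕ) :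
    Ideal (MvPolynomial (Fin 2) K) :=
  Ideal.span ((fun i : ℕ =>
    mono K (i * (a / Nat.gcd a b)) (b - i * (b / Nat.gcd a b))) '' (A : Set ℕ))

/-- For `T ⊆ A` and `g = gcd(a, b)` this implies that the product of the generators of `I_A`
indexed by `T` lies in `J · I_A ^ (|T| - 1)`. -/
def Shortenable (A : Finset ℕ) (g : ℕ) (T : Multiset ℕ) : Prop :=
  ∃ R : Multiset ℕ, (∀ x ∈ R, x ∈ A) ∧ R.card < T.card ∧
    (R.sum = T.sum ∨ R.sum + g = T.sum)

namespace Shortenable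

variable {A : Finset ℕ} {g : ℕ} {T T₀ : Multiset ℕ}

theorem mono (hT : ∀ x ∈ T, x ∈ A) (hle : T₀ ≤ T) (h : Shortenable A g T₀) :
    Shortenable A g T := by
  obtain ⟨R, hRA, hcard, hsum⟩ := h
  have hsplit : T - T₀ + T₀ = T := tsub_add_cancel_of_le hle
  refine ⟨R + (T - T₀), fun x hx => ?_, ?_, ?_⟩
  · rcases Multiset.mem_add.1 hx with hx | hx
    · exact hRA x hx
    · exact hT x (Multiset.mem_of_le (Multiset.sub_le_self T T₀) hx)
  · have := congrArg Multiset.card hsplit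
    rw [Multiset.card_add] at this
    rw [Multiset.card_add]
    omega
  · have := congrArg Multiset.sum hsplit
    rw [Multiset.sum_add] at this
    rw [Multiset.sum_add]
    omega

theorem of_zero_mem (hT : ∀ x ∈ T, x ∈ A) (h : 0 ∈ T) : Shortenable A g T :=
  mono hT (Multiset.singleton_le.2 h) ⟨0, by simp, by simp, by simp⟩

theorem of_self_mem (hT : ∀ x ∈ T, x ∈ A) (h : g ∈ T) : Shortenable A g T :=
  mono hT (Multiset.singleton_le.2 h) ⟨0, by simp, by simp, by simp⟩

theorem of_sum_mod_mem (hg : 0 < g) (hgA : g ∈ A) (hlt : ∀ x ∈ T, x < g)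
    (hmod : T.sum % g ∈ A) (h : g ≤ T.sum ∨ 2 ≤ T.card) : Shortenable A g T := by
  have hdiv := Nat.div_add_mod T.sum g
  rcases hc : T.sum / g with _ | c
  · rw [hc, mul_zero, zero_add] at hdiv
    have hcard : 2 ≤ T.card := h.resolve_left (by have := Nat.mod_lt T.sum hg; omega)
    exact ⟨{T.sum}, by simpa [hdiv] using hmod, by simp; omega, by simp⟩
  · rw [hc, mul_comm] at hdiv
    have hle : T.sum ≤ T.card * (g - 1) := by
      simpa using Multiset.sum_le_card_nsmul T (g - 1) fun x hx => by have := hlt x hx; omega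
    have hcard : c + 1 < T.card := by
      by_contra! hcard
      have : T.card * (g - 1) ≤ (c + 1) * (g - 1) := Nat.mul_le_mul_right _ hcard
      have : (c + 1) * (g - 1) < (c + 1) * g :=
        Nat.mul_lt_mul_of_pos_left (Nat.sub_lt hg one_pos) c.succ_pos
      omega
    refine ⟨T.sum % g ::ₘ Multiset.replicate c g, ?_, by simpa using hcard, Or.inr ?_⟩
    · intro x hx
      rcases Multiset.mem_cons.1 hx with rfl | hx
      · exact hmod
      · rwa [Multiset.eq_of_mem_replicate hx]
    · simp only [Multiset.sum_cons, Multiset.sum_replicate, smul_eq_mul]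
      linarith

theorem exists_cons_eq (h0A : 0 ∈ A) (h : Shortenable A g T) :
    ∃ ε R, (ε = 0 ∨ ε = g) ∧ (∀ x ∈ R, x ∈ A) ∧ (ε ::ₘ R).card = T.card ∧
      (ε ::ₘ R).sum = T.sum := by
  obtain ⟨R, hRA, hcard, hsum⟩ := h
  have hpad : ∀ x ∈ R + Multiset.replicate (T.card - 1 - R.card) 0, x ∈ A := by
    intro x hx
    rcases Multiset.mem_add.1 hx with hx | hx
    · exact hRA x hx
    · rwa [Multiset.eq_of_mem_replicate hx]
  rcases hsum with hsum | hsum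
  · exact ⟨0, _, Or.inl rfl, hpad, by simp; omega, by simp [hsum]⟩
  · exact ⟨g, _, Or.inr rfl, hpad, by simp; omega, by simp; omega⟩

end Shortenable

section Counting

open Finset

variable {A : Finset ℕ} {g : ℕ} {T : Multiset ℕ}

theorem card_add_card_le_of_not_shortenable (hg : 0 < g) (h0A : 0 ∈ A) (hgA : g ∈ A)
    (hA : ∀ x ∈ A, x ≤ g) (hT : ∀ x ∈ T, x ∈ A) (hT' : ¬ Shortenable A g T) :
    T.card + A.card ≤ g / A.gcd id + 2 := by
  have hbounds : ∀ x ∈ T, 0 < x ∧ x < g := fun x hx =>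
    ⟨Nat.pos_of_ne_zero fun h0 => hT' (.of_zero_mem hT (h0 ▸ hx)),
      lt_of_le_of_ne (hA x (hT x hx)) fun hxg => hT' (.of_self_mem hT (hxg ▸ hx))⟩
  have hsub : ∀ T₀ ≤ T, T₀.sum % g ∈ A → g ≤ T₀.sum ∨ 2 ≤ T₀.card → False :=
    fun T₀ hle hmod h => hT' <| .mono hT hle <| .of_sum_mod_mem hg hgA
      (fun x hx => (hbounds x (Multiset.mem_of_le hle hx)).2) hmod h
  set d := A.gcd id
  set L := T.toList
  set M : Finset ℕ := {x ∈ Ioc 0 g | d ∣ x}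
  have hL : L.length = T.card := Multiset.length_toList T
  have hLT : ∀ {B : List ℕ}, B.Sublist L → (B : Multiset ℕ) ≤ T := fun hB =>
    T.coe_toList ▸ Multiset.coe_le.2 hB.subperm
  have hmaps : ∀ j ∈ Icc 2 T.card, (L.take j).sum % g ∈ M \ A := by
    intro j hj
    have hj2 : 2 ≤ ((L.take j : List ℕ) : Multiset ℕ).card := by
      simp only [Multiset.coe_card, List.length_take, mem_Icc] at hj ⊢; omega
    have hnot : (L.take j).sum % g ∉ A := fun hmem =>
      hsub _ (hLT (L.take_sublist j)) (by simpa using hmem) (Or.inr hj2)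
    refine mem_sdiff.2 ⟨mem_filter.2 ⟨mem_Ioc.2 ⟨?_, (Nat.mod_lt _ hg).le⟩, ?_⟩, hnot⟩
    · exact Nat.pos_of_ne_zero fun h0 => hnot (h0 ▸ h0A)
    · refine (Nat.dvd_mod_iff (Finset.gcd_dvd hgA)).2 (List.dvd_sum fun x hx => ?_)
      exact Finset.gcd_dvd (hT x (Multiset.mem_of_le (hLT (L.take_sublist j)) hx))
  have hinj : Set.InjOn (fun j => (L.take j).sum % g) (Icc 2 T.card) := by
    suffices key : ∀ j ∈ Icc 2 T.card, ∀ k ∈ Icc 2 T.card, j < k →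
        (L.take j).sum % g ≠ (L.take k).sum % g by
      intro j hj k hk h
      by_contra hne
      rcases Nat.lt_or_gt_of_ne hne with hlt | hlt
      · exact key j hj k hk hlt h
      · exact key k hk j hj hlt h.symm
    intro j hj k hk hjk h
    set B := (L.drop j).take (k - j)
    have hB : B.Sublist L := (List.take_sublist _ _).trans (List.drop_sublist _ _)
    have hBlen : B.length = k - j := by
      simp only [B, List.length_take, List.length_drop, mem_Icc] at hj hk ⊢; omega
    have hBsum : (L.take j).sum + B.sum = (L.take k).sum := by
      rw [← List.sum_append, ← List.take_add, Nat.add_sub_cancel' hjk.le]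
    have hBmod : B.sum % g = 0 := by
      have := Nat.sub_mod_eq_zero_of_mod_eq h.symm
      rwa [← hBsum, Nat.add_sub_cancel_left] at this
    have hBpos : 0 < B.sum := List.sum_pos _
      (fun x hx => (hbounds x (Multiset.mem_of_le (hLT hB) hx)).1)
      (List.ne_nil_of_length_pos (by omega))
    exact hsub B (hLT hB) (by simpa [hBmod] using h0A)
      (Or.inl (Nat.le_of_dvd hBpos (Nat.dvd_of_mod_eq_zero hBmod)))
  have hAM : A.erase 0 ⊆ M ∩ A := fun x hx => by
    obtain ⟨hx0, hxA⟩ := mem_erase.1 hx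
    exact mem_inter.2 ⟨mem_filter.2 ⟨mem_Ioc.2 ⟨Nat.pos_of_ne_zero hx0, hA x hxA⟩,
      Finset.gcd_dvd hxA⟩, hxA⟩
  have h1 := card_le_card_of_injOn _ hmaps hinj
  have h2 := card_sdiff_add_card_inter M A
  have h3 := card_le_card hAM
  rw [Nat.card_Icc] at h1
  rw [Nat.Ioc_filter_dvd_card_eq_div] at h2
  rw [card_erase_of_mem h0A] at h3
  omega

theorem Shortenable.of_le_card_add_card (hg : 0 < g) (h0A : 0 ∈ A) (hgA : g ∈ A)
    (hA : ∀ x ∈ A, x ≤ g) (hT : ∀ x ∈ T, x ∈ A)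
    (hcard : g / A.gcd id + 3 ≤ T.card + A.card) :
    Shortenable A g T := by
  by_contra hT'
  have := card_add_card_le_of_not_shortenable hg h0A hgA hA hT hT'
  omega

end Counting

theorem Set.exists_multiset_of_mem_image_pow {ι M : Type*} [CommMonoid M] {f : ι → M}
    {s : Set ι} {n : ℕ} {z : M} (hz : z ∈ (f '' s) ^ n) :
    ∃ S : Multiset ι, (∀ i ∈ S, i ∈ s) ∧ S.card = n ∧ (S.map f).prod = z := by
  induction n generalizing z with
  | zero => exact ⟨0, by simp, rfl, by simpa [eq_comm] using hz⟩
  | succ n ih =>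
    obtain ⟨u, hu, _, ⟨i, hi, rfl⟩, rfl⟩ := Set.mem_mul.1 (pow_succ (f '' s) n ▸ hz)
    obtain ⟨S, hS, rfl, rfl⟩ := ih hu
    refine ⟨i ::ₘ S, ?_, by simp, by simp [mul_comm]⟩
    intro j hj
    rcases Multiset.mem_cons.1 hj with rfl | hj
    exacts [hi, hS j hj]

theorem Ideal.multiset_prod_map_mem_span_image_pow {ι R : Type*} [CommSemiring R] {f : ι → R}
    {s : Set ι} {S : Multiset ι} (hS : ∀ i ∈ S, i ∈ s) :
    (S.map f).prod ∈ Ideal.span (f '' s) ^ S.card := by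
  rw [Submodule.span_pow]
  refine Ideal.subset_span ?_
  have := Set.multiset_prod_mem_multiset_prod S (fun _ => f '' s) f
    fun i hi => Set.mem_image_of_mem f (hS i hi)
  rwa [Multiset.map_const', Multiset.prod_replicate] at this

section Monomials

variable (K : Type*) [Field K]

theorem mono_mul (c d c' d' : ℕ) : mono K c d * mono K c' d' = mono K (c + c') (d + d') := by
  simp only [mono]
  ring

noncomputable def IAGen (a b i : ℕ) : MvPolynomial (Fin 2) K :=
  mono K (i * (a / Nat.gcd a b)) (b - i * (b / Nat.gcd a b))

theorem IA_eq_span (a b : ℕ) (A : Finset ℕ) : IA K a b A = Ideal.span (IAGen K a b '' A) := rfl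

theorem IAGen_zero (a b : ℕ) : IAGen K a b 0 = mono K 0 b := by
  simp [IAGen]

theorem IAGen_gcd (a b : ℕ) : IAGen K a b (Nat.gcd a b) = mono K a 0 := by
  simp [IAGen, Nat.mul_div_cancel' (Nat.gcd_dvd_left a b),
    Nat.mul_div_cancel' (Nat.gcd_dvd_right a b)]

theorem prod_map_IAGen (a b : ℕ) (S : Multiset ℕ) (hS : ∀ i ∈ S, i ≤ Nat.gcd a b) :
    (S.map (IAGen K a b)).prod =
      mono K (S.sum * (a / Nat.gcd a b)) (S.card * b - S.sum * (b / Nat.gcd a b)) := by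
  have hb : Nat.gcd a b * (b / Nat.gcd a b) = b := Nat.mul_div_cancel' (Nat.gcd_dvd_right a b)
  induction S using Multiset.induction_on with
  | empty => simp [mono]
  | cons i S ih =>
    have hi : i * (b / Nat.gcd a b) ≤ b :=
      (Nat.mul_le_mul_right _ (hS i (Multiset.mem_cons_self i S))).trans hb.le
    have hSg : S.sum ≤ S.card * Nat.gcd a b := by
      simpa using Multiset.sum_le_card_nsmul S _ fun j hj => hS j (Multiset.mem_cons_of_mem hj)
    have hSb : S.sum * (b / Nat.gcd a b) ≤ S.card * b :=
      (Nat.mul_le_mul_right _ hSg).trans (by rw [mul_assoc, hb])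
    rw [Multiset.map_cons, Multiset.prod_cons, ih fun j hj => hS j (Multiset.mem_cons_of_mem hj),
      IAGen, mono_mul, Multiset.sum_cons, Multiset.card_cons]
    simp only [add_mul, one_mul]
    congr 1
    omega

theorem Jab_le_IA (a b : ℕ) {A : Finset ℕ} (h0A : 0 ∈ A) (hgA : Nat.gcd a b ∈ A) :
    Jab K a b ≤ IA K a b A := by
  rw [Jab, IA_eq_span, Ideal.span_le]
  rintro _ (rfl | rfl)
  · exact Ideal.subset_span ⟨_, hgA, IAGen_gcd K a b⟩
  · exact Ideal.subset_span ⟨_, h0A, IAGen_zero K a b⟩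

theorem IAGen_mem_Jab {a b ε : ℕ} (hε : ε = 0 ∨ ε = Nat.gcd a b) :
    IAGen K a b ε ∈ Jab K a b := by
  rcases hε with rfl | rfl
  · exact Ideal.subset_span (by simp [IAGen_zero])
  · exact Ideal.subset_span (by simp [IAGen_gcd])

end Monomials

theorem stmt2_general (K : Type*) [Field K] (a b : ℕ) (ha : 0 < a)
    (A : Finset ℕ) (hA1 : ({0, Nat.gcd a b} : Finset ℕ) ⊆ A)
    (hA2 : A ⊆ Finset.range (Nat.gcd a b + 1)) :
    IA K a b A ^ (Nat.gcd a b / A.gcd id + 2 - A.card + 1)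
      = Jab K a b * IA K a b A ^ (Nat.gcd a b / A.gcd id + 2 - A.card) := by
  have h0A : 0 ∈ A := hA1 (by simp)
  have hgA : Nat.gcd a b ∈ A := hA1 (by simp)
  have hAg : ∀ i ∈ A, i ≤ Nat.gcd a b := fun i hi =>
    Nat.lt_succ_iff.1 (Finset.mem_range.1 (hA2 hi))
  refine le_antisymm ?_
    (pow_succ' (IA K a b A) _ ▸ Ideal.mul_mono_left (Jab_le_IA K a b h0A hgA))
  rw [IA_eq_span, Submodule.span_pow, Ideal.span_le]
  intro z hz
  obtain ⟨T, hTA, hTcard, rfl⟩ := Set.exists_multiset_of_mem_image_pow hz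
  obtain ⟨ε, R, hε, hRA, hcard, hsum⟩ := (Shortenable.of_le_card_add_card
    (Nat.gcd_pos_of_pos_left b ha) h0A hgA hAg hTA (by omega)).exists_cons_eq h0A
  have hεR : ∀ i ∈ ε ::ₘ R, i ≤ Nat.gcd a b := fun i hi => by
    rcases Multiset.mem_cons.1 hi with rfl | hi
    · rcases hε with rfl | rfl <;> simp
    · exact hAg i (hRA i hi)
  rw [SetLike.mem_coe, prod_map_IAGen K a b T fun i hi => hAg i (hTA i hi), ← hcard, ← hsum,
    ← prod_map_IAGen K a b _ hεR, Multiset.map_cons, Multiset.prod_cons]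
  refine Ideal.mul_mem_mul (IAGen_mem_Jab K hε) ?_
  have hRcard : R.card = Nat.gcd a b / A.gcd id + 2 - A.card := by
    rw [Multiset.card_cons] at hcard; omega
  exact hRcard ▸ Ideal.multiset_prod_map_mem_span_image_pow hRA

theorem stmt2 (K : Type*) [Field K] (a b : ℕ) (ha : 0 < a) (hb : 0 < b)
    (A : Finset ℕ) (hA1 : ({0, Nat.gcd a b} : Finset ℕ) ⊆ A)
    (hA2 : A ⊆ Finset.range (Nat.gcd a b + 1)) :
    IA K a b A ^ (Nat.gcd a b / A.gcd id + 2 - A.card + 1)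
      = Jab K a b * IA K a b A ^ (Nat.gcd a b / A.gcd id + 2 - A.card) :=
  stmt2_general K a b ha A hA1 hA2
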